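/- Let d ≥ 1 and 0 < α < d. There exists a constant C = C(α,d) > 0 such that for every λ' > 0, every c ≥ 0, all 0 < t ≤ t' and all x, y ∈ ℝ^d, ∫_{ℝ^d} ∫_{ℝ^d} e^{λ'(|w|+|z|)} p_t(x−w) p_{t'}(y−z) (|w−z|^{-α} + c) dw dz ≤ C e^{2(λ')² t'} e^{λ'(|x|+|y|)} ((t+t')^{-α/2} + c). -/

import Mathlib

/-!
Completing the square gives `e^{λ|z|} p_s(a - z) ≤ 2^{d/2} e^{λ|a| + λ²s} p_{2s}(a - z)`: the
exponential weights are absorbed at the cost of doubling the time. Against a heat kernel `p_s` the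
Riesz kernel `|b - z|^{-α}` integrates to at most `K s^{-α/2}`, uniformly in the two centres: split
at `|b - z| = √s`, bound `p_s` by its maximum near `b` and `|b - z|^{-α}` by `s^{-α/2}` away from
`b`, and evaluate the near part by scaling. Integrating first in `z`, then in `w`, bounds the
double integral by `2^d e^{λ(|x|+|y|)} e^{λ²(t+t')} (K (2t')^{-α/2} + c)`, and `t ≤ t'` finishes.
-/

open Real MeasureTheory

/-- The `d`-dimensional heat kernel `p_t(x) = (2πt)^{-d/2} exp(-|x|²/(2t))`. -/
noncomputable def heatKernel (d : ℕ) (t : ℝ) (x : EuclideanSpace ℝ (Fin d)) : ℝ :=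
  (2 * Real.pi * t) ^ (-(d : ℝ) / 2) * Real.exp (-‖x‖ ^ 2 / (2 * t))

open Metric Set Module

section RieszKernel

variable {E : Type*} [NormedAddCommGroup E] [NormedSpace ℝ E] [FiniteDimensional ℝ E]
  [MeasurableSpace E] [BorelSpace E] (μ : Measure E) [μ.IsAddHaarMeasure]

theorem setIntegral_ball_norm_rpow_neg (α : ℝ) {R : ℝ} (hR : 0 < R) :
    ∫ z in ball (0 : E) R, ‖z‖ ^ (-α) ∂μ =
      R ^ ((finrank ℝ E : ℝ) - α) * ∫ z in ball (0 : E) 1, ‖z‖ ^ (-α) ∂μ := by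
  have hscale := Measure.setIntegral_comp_smul_of_pos μ (fun z : E => ‖z‖ ^ (-α)) (ball 0 1) hR
  simp only [norm_smul, Real.norm_of_nonneg hR.le, Real.mul_rpow hR.le (norm_nonneg _),
    integral_const_mul, smul_unitBall_of_pos hR, smul_eq_mul] at hscale
  rw [Real.rpow_sub hR, Real.rpow_natCast, div_eq_mul_inv, ← Real.rpow_neg hR.le, mul_assoc,
    hscale, mul_inv_cancel_left₀ (by positivity)]

theorem integrable_indicator_ball_norm_rpow_neg_sub {α : ℝ} (hα0 : 0 ≤ α)
    (hαE : α < finrank ℝ E) (R : ℝ) (b : E) :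
    Integrable (fun z => (ball (0 : E) R).indicator (fun v => ‖v‖ ^ (-α)) (b - z)) μ := by
  have hE : 1 ≤ finrank ℝ E := by exact_mod_cast hα0.trans_lt hαE
  have hball : IntegrableOn (fun v : E => ‖v‖ ^ (-α)) (ball 0 R) μ :=
    integrableOn_ball_of_norm_le_rpow hE hαE (C := 1)
      (ae_of_all _ fun v => by rw [one_mul, norm_of_nonneg (by positivity)])
      (measurable_norm.pow_const _).aestronglyMeasurable
  exact ((integrable_indicator_iff measurableSet_ball).mpr hball).comp_sub_left b

end RieszKernel

section HeatKernel

variable {d : ℕ}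

theorem heatKernel_nonneg {t : ℝ} (ht : 0 < t) (x : EuclideanSpace ℝ (Fin d)) :
    0 ≤ heatKernel d t x := by
  unfold heatKernel; positivity

theorem heatKernel_le {t : ℝ} (ht : 0 < t) (x : EuclideanSpace ℝ (Fin d)) :
    heatKernel d t x ≤ (2 * π * t) ^ (-(d : ℝ) / 2) := by
  refine mul_le_of_le_one_right (by positivity) (exp_le_one_iff.mpr ?_)
  exact div_nonpos_of_nonpos_of_nonneg (neg_nonpos.mpr (sq_nonneg _)) (by positivity)

theorem integral_heatKernel {t : ℝ} (ht : 0 < t) :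
    ∫ x, heatKernel d t x = 1 := by
  have hgauss := GaussianFourier.integral_rexp_neg_mul_sq_norm (V := EuclideanSpace ℝ (Fin d))
    (inv_pos.mpr (by positivity : (0 : ℝ) < 2 * t))
  simp only [neg_mul, ← neg_div, ← div_eq_inv_mul, finrank_euclideanSpace_fin] at hgauss
  simp only [heatKernel, integral_const_mul, hgauss]
  rw [div_inv_eq_mul, mul_left_comm, ← mul_assoc, ← Real.rpow_add (by positivity), neg_div,
    neg_add_cancel, Real.rpow_zero]

theorem integrable_heatKernel {t : ℝ} (ht : 0 < t) :
    Integrable (heatKernel d t) :=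
  .of_integral_ne_zero (by rw [integral_heatKernel ht]; exact one_ne_zero)

theorem integral_heatKernel_sub {t : ℝ} (ht : 0 < t) (a : EuclideanSpace ℝ (Fin d)) :
    ∫ z, heatKernel d t (a - z) = 1 := by
  rw [integral_sub_left_eq_self (heatKernel d t) volume a, integral_heatKernel ht]

theorem exp_mul_norm_mul_heatKernel_le {t lam : ℝ} (ht : 0 < t) (hlam : 0 ≤ lam)
    (a z : EuclideanSpace ℝ (Fin d)) :
    exp (lam * ‖z‖) * heatKernel d t (a - z) ≤
      2 ^ ((d : ℝ) / 2) * exp (lam * ‖a‖ + lam ^ 2 * t) * heatKernel d (2 * t) (a - z) := by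
  have hprefactor : (2 * π * t) ^ (-(d : ℝ) / 2) =
      2 ^ ((d : ℝ) / 2) * (2 * π * (2 * t)) ^ (-(d : ℝ) / 2) := by
    rw [show 2 * π * (2 * t) = 2 * (2 * π * t) by ring,
      Real.mul_rpow zero_le_two (by positivity), ← mul_assoc, ← Real.rpow_add two_pos,
      ← add_div, add_neg_cancel, zero_div, Real.rpow_zero, one_mul]
  -- `‖z‖ ≤ ‖a‖ + ‖a - z‖`, and `λr - r²/(4t) ≤ λ²t` lets half of the Gaussian absorb `e^{λr}`.
  have hexponent : lam * ‖z‖ + -‖a - z‖ ^ 2 / (2 * t) ≤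
      lam * ‖a‖ + lam ^ 2 * t + -‖a - z‖ ^ 2 / (2 * (2 * t)) := by
    have htriangle : ‖z‖ ≤ ‖a‖ + ‖a - z‖ := by
      simpa [norm_sub_rev z a] using norm_le_norm_add_norm_sub' z a
    have hsquare : lam * ‖a - z‖ + -‖a - z‖ ^ 2 / (2 * t) -
        (lam ^ 2 * t + -‖a - z‖ ^ 2 / (2 * (2 * t))) = -(‖a - z‖ - 2 * lam * t) ^ 2 / (4 * t) := by
      field_simp; ring
    have : -(‖a - z‖ - 2 * lam * t) ^ 2 / (4 * t) ≤ 0 :=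
      div_nonpos_of_nonpos_of_nonneg (neg_nonpos.mpr (sq_nonneg _)) (by positivity)
    nlinarith [mul_le_mul_of_nonneg_left htriangle hlam]
  calc exp (lam * ‖z‖) * heatKernel d t (a - z)
      = (2 * π * t) ^ (-(d : ℝ) / 2) * exp (lam * ‖z‖ + -‖a - z‖ ^ 2 / (2 * t)) := by
        rw [heatKernel, exp_add]; ring
    _ ≤ (2 * π * t) ^ (-(d : ℝ) / 2) *
        exp (lam * ‖a‖ + lam ^ 2 * t + -‖a - z‖ ^ 2 / (2 * (2 * t))) := by gcongr
    _ = _ := by rw [hprefactor, heatKernel, exp_add]; ring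

theorem heatKernel_mul_norm_rpow_neg_le {s α : ℝ} (hs : 0 < s) (hα : 0 ≤ α)
    (a b z : EuclideanSpace ℝ (Fin d)) :
    heatKernel d s (a - z) * ‖b - z‖ ^ (-α) ≤
      (2 * π * s) ^ (-(d : ℝ) / 2) * (ball 0 √s).indicator (fun v => ‖v‖ ^ (-α)) (b - z) +
        s ^ (-α / 2) * heatKernel d s (a - z) := by
  have hp := heatKernel_nonneg (d := d) hs (a - z)
  -- Near `b` bound the heat kernel by its maximum, away from `b` the Riesz kernel by `s^{-α/2}`.
  by_cases hz : b - z ∈ ball 0 √s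
  · rw [indicator_of_mem hz]
    exact le_add_of_le_of_nonneg
      (mul_le_mul_of_nonneg_right (heatKernel_le hs _) (by positivity)) (by positivity)
  · rw [indicator_of_notMem hz, mul_zero, zero_add]
    have hfar : √s ≤ ‖b - z‖ := by simpa using hz
    calc heatKernel d s (a - z) * ‖b - z‖ ^ (-α) ≤ heatKernel d s (a - z) * √s ^ (-α) := by
          gcongr ?_ * ?_
          exact Real.rpow_le_rpow_of_nonpos (sqrt_pos.mpr hs) hfar (neg_nonpos.mpr hα)
      _ = _ := by rw [sqrt_eq_rpow, ← Real.rpow_mul hs.le, mul_comm]; ring_nf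

noncomputable def heatRieszConst (d : ℕ) (α : ℝ) : ℝ :=
  (2 * π) ^ (-(d : ℝ) / 2) * (∫ z in ball (0 : EuclideanSpace ℝ (Fin d)) 1, ‖z‖ ^ (-α)) + 1

theorem heatRieszConst_nonneg (d : ℕ) (α : ℝ) : 0 ≤ heatRieszConst d α := by
  unfold heatRieszConst
  positivity

theorem integrable_heatKernel_mul_norm_rpow_neg {s α : ℝ} (hs : 0 < s) (hα0 : 0 ≤ α)
    (hαd : α < d) (a b : EuclideanSpace ℝ (Fin d)) :
    Integrable (fun z => heatKernel d s (a - z) * ‖b - z‖ ^ (-α)) := by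
  have hαd' : α < finrank ℝ (EuclideanSpace ℝ (Fin d)) := by rwa [finrank_euclideanSpace_fin]
  refine Integrable.mono'
    (((integrable_indicator_ball_norm_rpow_neg_sub volume hα0 hαd' √s b).const_mul
      ((2 * π * s) ^ (-(d : ℝ) / 2))).add
        (((integrable_heatKernel hs).comp_sub_left a).const_mul (s ^ (-α / 2))))
    (by unfold heatKernel; fun_prop) (ae_of_all _ fun z => ?_)
  rw [norm_of_nonneg (mul_nonneg (heatKernel_nonneg hs _) (by positivity))]
  exact heatKernel_mul_norm_rpow_neg_le hs hα0 a b z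

theorem integral_heatKernel_mul_norm_rpow_neg_le {s α : ℝ} (hs : 0 < s) (hα0 : 0 ≤ α)
    (hαd : α < d) (a b : EuclideanSpace ℝ (Fin d)) :
    ∫ z, heatKernel d s (a - z) * ‖b - z‖ ^ (-α) ≤ heatRieszConst d α * s ^ (-α / 2) := by
  have hαd' : α < finrank ℝ (EuclideanSpace ℝ (Fin d)) := by rwa [finrank_euclideanSpace_fin]
  have hball := integrable_indicator_ball_norm_rpow_neg_sub volume hα0 hαd' √s b
  have hgauss := (integrable_heatKernel hs).comp_sub_left a
  calc ∫ z, heatKernel d s (a - z) * ‖b - z‖ ^ (-α)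
      ≤ ∫ z, (2 * π * s) ^ (-(d : ℝ) / 2) *
            (ball 0 √s).indicator (fun v => ‖v‖ ^ (-α)) (b - z) +
          s ^ (-α / 2) * heatKernel d s (a - z) :=
        integral_mono_of_nonneg
          (ae_of_all _ fun z => mul_nonneg (heatKernel_nonneg hs _) (by positivity))
          ((hball.const_mul _).add (hgauss.const_mul _))
          (ae_of_all _ fun z => heatKernel_mul_norm_rpow_neg_le hs hα0 a b z)
    _ = heatRieszConst d α * s ^ (-α / 2) := by
      rw [integral_add (hball.const_mul _) (hgauss.const_mul _), integral_const_mul,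
        integral_const_mul, integral_heatKernel_sub hs,
        integral_sub_left_eq_self (fun v => (ball 0 √s).indicator (fun v => ‖v‖ ^ (-α)) v),
        integral_indicator measurableSet_ball,
        setIntegral_ball_norm_rpow_neg volume α (sqrt_pos.mpr hs), finrank_euclideanSpace_fin,
        heatRieszConst]
      have hscaling : (2 * π * s) ^ (-(d : ℝ) / 2) * √s ^ ((d : ℝ) - α) =
          (2 * π) ^ (-(d : ℝ) / 2) * s ^ (-α / 2) := by
        rw [Real.mul_rpow (by positivity) hs.le, sqrt_eq_rpow, ← Real.rpow_mul hs.le, mul_assoc,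
          ← Real.rpow_add hs]
        ring_nf
      rw [← mul_assoc, hscaling]
      ring

theorem integral_exp_mul_norm_mul_heatKernel_mul_riesz_le {s α lam c : ℝ} (hs : 0 < s)
    (hα0 : 0 ≤ α) (hαd : α < d) (hlam : 0 ≤ lam) (hc : 0 ≤ c) (a b : EuclideanSpace ℝ (Fin d)) :
    ∫ z, exp (lam * ‖z‖) * heatKernel d s (a - z) * (‖b - z‖ ^ (-α) + c) ≤
      2 ^ ((d : ℝ) / 2) * exp (lam * ‖a‖ + lam ^ 2 * s) *
        (heatRieszConst d α * (2 * s) ^ (-α / 2) + c) := by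
  have hs2 : 0 < 2 * s := by positivity
  have hriesz := integrable_heatKernel_mul_norm_rpow_neg hs2 hα0 hαd a b
  have hgauss := ((integrable_heatKernel hs2).comp_sub_left a).mul_const c
  calc ∫ z, exp (lam * ‖z‖) * heatKernel d s (a - z) * (‖b - z‖ ^ (-α) + c)
      ≤ ∫ z, 2 ^ ((d : ℝ) / 2) * exp (lam * ‖a‖ + lam ^ 2 * s) *
          (heatKernel d (2 * s) (a - z) * ‖b - z‖ ^ (-α) + heatKernel d (2 * s) (a - z) * c) := by
        refine integral_mono_of_nonneg (ae_of_all _ fun z => ?_) ((hriesz.add hgauss).const_mul _)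
          (ae_of_all _ fun z => ?_)
        · have := heatKernel_nonneg hs (a - z)
          positivity
        · dsimp only
          rw [← mul_add, ← mul_assoc]
          exact mul_le_mul_of_nonneg_right (exp_mul_norm_mul_heatKernel_le hs hlam a z)
            (by positivity)
    _ ≤ 2 ^ ((d : ℝ) / 2) * exp (lam * ‖a‖ + lam ^ 2 * s) *
          (heatRieszConst d α * (2 * s) ^ (-α / 2) + c) := by
        rw [integral_const_mul, integral_add hriesz hgauss, integral_mul_const,
          integral_heatKernel_sub hs2, one_mul]
        gcongr
        exact integral_heatKernel_mul_norm_rpow_neg_le hs2 hα0 hαd a b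

theorem heatKernel_double_convolution_riesz_le {α lam c t t' : ℝ} (hα0 : 0 ≤ α) (hαd : α < d)
    (hlam : 0 ≤ lam) (hc : 0 ≤ c) (ht : 0 < t) (ht' : 0 < t') (x y : EuclideanSpace ℝ (Fin d)) :
    ∫ w, ∫ z, exp (lam * (‖w‖ + ‖z‖)) * heatKernel d t (x - w) * heatKernel d t' (y - z) *
        (‖w - z‖ ^ (-α) + c) ≤
      2 ^ ((d : ℝ) / 2) * exp (lam * ‖x‖ + lam ^ 2 * t) *
        (2 ^ ((d : ℝ) / 2) * exp (lam * ‖y‖ + lam ^ 2 * t') *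
          (heatRieszConst d α * (2 * t') ^ (-α / 2) + c)) := by
  set A := 2 ^ ((d : ℝ) / 2) * exp (lam * ‖y‖ + lam ^ 2 * t') *
    (heatRieszConst d α * (2 * t') ^ (-α / 2) + c)
  have hA : 0 ≤ A := by
    have := heatRieszConst_nonneg d α
    positivity
  have hinner : ∀ w, ∫ z, exp (lam * (‖w‖ + ‖z‖)) * heatKernel d t (x - w) *
      heatKernel d t' (y - z) * (‖w - z‖ ^ (-α) + c) ≤
      2 ^ ((d : ℝ) / 2) * exp (lam * ‖x‖ + lam ^ 2 * t) * heatKernel d (2 * t) (x - w) * A := by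
    intro w
    have hsplit : (fun z => exp (lam * (‖w‖ + ‖z‖)) * heatKernel d t (x - w) *
        heatKernel d t' (y - z) * (‖w - z‖ ^ (-α) + c)) = fun z =>
          exp (lam * ‖w‖) * heatKernel d t (x - w) *
            (exp (lam * ‖z‖) * heatKernel d t' (y - z) * (‖w - z‖ ^ (-α) + c)) := by
      ext z
      rw [mul_add lam, exp_add]
      ring
    have hp := heatKernel_nonneg ht (x - w)
    rw [hsplit, integral_const_mul]
    calc _ ≤ exp (lam * ‖w‖) * heatKernel d t (x - w) * A := by
          gcongr
          exact integral_exp_mul_norm_mul_heatKernel_mul_riesz_le ht' hα0 hαd hlam hc y w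
      _ ≤ _ := mul_le_mul_of_nonneg_right (exp_mul_norm_mul_heatKernel_le ht hlam x w) hA
  calc _ ≤ ∫ w, 2 ^ ((d : ℝ) / 2) * exp (lam * ‖x‖ + lam ^ 2 * t) *
        heatKernel d (2 * t) (x - w) * A := by
        refine integral_mono_of_nonneg (ae_of_all _ fun w => integral_nonneg fun z => ?_)
          ((((integrable_heatKernel (by positivity)).comp_sub_left x).const_mul _).mul_const _)
          (ae_of_all _ hinner)
        have := heatKernel_nonneg ht (x - w)
        have := heatKernel_nonneg ht' (y - z)
        positivity
    _ = 2 ^ ((d : ℝ) / 2) * exp (lam * ‖x‖ + lam ^ 2 * t) * A := by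
        rw [integral_mul_const, integral_const_mul, integral_heatKernel_sub (by positivity),
          mul_one]

end HeatKernel

theorem heatKernel_double_convolution_riesz_exp_bound_general
    (d : ℕ) (α : ℝ) (hα0 : 0 < α) (hαd : α < d) :
    ∃ C : ℝ, 0 < C ∧ ∀ (lam : ℝ), 0 < lam → ∀ (c : ℝ), 0 ≤ c →
      ∀ (t t' : ℝ), 0 < t → t ≤ t' → ∀ (x y : EuclideanSpace ℝ (Fin d)),
      (∫ w : EuclideanSpace ℝ (Fin d), ∫ z : EuclideanSpace ℝ (Fin d),
          Real.exp (lam * (‖w‖ + ‖z‖)) * heatKernel d t (x - w) * heatKernel d t' (y - z) *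
            (‖w - z‖ ^ (-α) + c))
        ≤ C * Real.exp (2 * lam ^ 2 * t') * Real.exp (lam * (‖x‖ + ‖y‖)) *
            ((t + t') ^ (-α / 2) + c) := by
  have hK := heatRieszConst_nonneg d α
  refine ⟨2 ^ (d : ℝ) * (heatRieszConst d α + 1), by positivity, ?_⟩
  intro lam hlam c hc t t' ht htt' x y
  have ht' : 0 < t' := ht.trans_le htt'
  have hpow : (2 : ℝ) ^ ((d : ℝ) / 2) * 2 ^ ((d : ℝ) / 2) = 2 ^ (d : ℝ) := by
    rw [← Real.rpow_add two_pos, add_halves]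
  have hexp : exp (lam * ‖x‖ + lam ^ 2 * t) * exp (lam * ‖y‖ + lam ^ 2 * t') ≤
      exp (2 * lam ^ 2 * t') * exp (lam * (‖x‖ + ‖y‖)) := by
    rw [← exp_add, ← exp_add, exp_le_exp]
    nlinarith [mul_le_mul_of_nonneg_left htt' (sq_nonneg lam)]
  have htime : (2 * t') ^ (-α / 2) ≤ (t + t') ^ (-α / 2) :=
    Real.rpow_le_rpow_of_nonpos (by positivity) (by linarith) (by linarith)
  have hriesz : heatRieszConst d α * (2 * t') ^ (-α / 2) + c ≤
      (heatRieszConst d α + 1) * ((t + t') ^ (-α / 2) + c) := by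
    nlinarith [mul_le_mul_of_nonneg_left htime hK,
      Real.rpow_nonneg (by positivity : 0 ≤ t + t') (-α / 2)]
  calc _ ≤ _ := heatKernel_double_convolution_riesz_le hα0.le hαd hlam.le hc ht ht' x y
    _ = (2 ^ ((d : ℝ) / 2) * 2 ^ ((d : ℝ) / 2)) *
          (exp (lam * ‖x‖ + lam ^ 2 * t) * exp (lam * ‖y‖ + lam ^ 2 * t')) *
          (heatRieszConst d α * (2 * t') ^ (-α / 2) + c) := by ring
    _ ≤ 2 ^ (d : ℝ) * (exp (2 * lam ^ 2 * t') * exp (lam * (‖x‖ + ‖y‖))) *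
          ((heatRieszConst d α + 1) * ((t + t') ^ (-α / 2) + c)) := by
        rw [hpow]
        gcongr
    _ = _ := by ring

/-- For `0 < α < d` there is `C = C(α,d) > 0` such that for every `λ' > 0`,
`c ≥ 0`, `0 < t ≤ t'` and `x, y ∈ ℝ^d`,
`∫∫ e^{λ'(|w|+|z|)} p_t(x−w) p_{t'}(y−z) (|w−z|^{-α}+c) dw dz
  ≤ C e^{2λ'²t'} e^{λ'(|x|+|y|)} ((t+t')^{-α/2}+c)`. -/
theorem heatKernel_double_convolution_riesz_exp_bound
    (d : ℕ) (hd : 1 ≤ d) (α : ℝ) (hα0 : 0 < α) (hαd : α < d) :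
    ∃ C : ℝ, 0 < C ∧ ∀ (lam : ℝ), 0 < lam → ∀ (c : ℝ), 0 ≤ c →
      ∀ (t t' : ℝ), 0 < t → t ≤ t' → ∀ (x y : EuclideanSpace ℝ (Fin d)),
      (∫ w : EuclideanSpace ℝ (Fin d), ∫ z : EuclideanSpace ℝ (Fin d),
          Real.exp (lam * (‖w‖ + ‖z‖)) * heatKernel d t (x - w) * heatKernel d t' (y - z) *
            (‖w - z‖ ^ (-α) + c))
        ≤ C * Real.exp (2 * lam ^ 2 * t') * Real.exp (lam * (‖x‖ + ‖y‖)) *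
            ((t + t') ^ (-α / 2) + c) :=
  heatKernel_double_convolution_riesz_exp_bound_general d α hα0 hαd
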